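/- Let A be an N×N reaction matrix with strongly connected graph, X_∞ > 0 with A X_∞ = 0, and let F = diag(f_1,...,f_N) be a nonnegative diagonal matrix with f_{k_0} > 0 for some k_0. Then there exists λ > 0 such that for all v ∈ ℝ^N: ∑_{1 ≤ k < ℓ ≤ N} (a_{kℓ} v_{ℓ,∞} + a_{ℓk} v_{k,∞})(v_k/v_{k,∞} - v_ℓ/v_{ℓ,∞})² + 2 ∑_{k=1}^N f_k v_k² / v_{k,∞} ≥ λ ∑_{k=1}^N v_k² / v_{k,∞}. Consequently, every solution of V' = (A - F)V satisfies ∑_k v_k(t)²/v_{k,∞} ≤ e^{-λ t} ∑_k v_k(0)²/v_{k,∞}, i.e., solutions of a source component decay exponentially to zero. -/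

import Mathlib

open Finset Matrix

/-!
Write `w k = v k / vinf k`. Because `A *ᵥ vinf = 0` and the columns of `A` sum to zero,
`-2 ∑ₖ vₖ (A v)ₖ / vinf k` is the Dirichlet form `∑ₖ ∑ₗ A k l vinf l (w k - w l)²`, so along
`V' = (A - diag f) V` the energy `∑ₖ vₖ² / vinf k` decreases at the rate of the dissipation
(Dirichlet form plus the out-flow term). The dissipation is a nonnegative quadratic form; if it
vanishes, `w` is constant along every edge, hence constant by strong connectivity, and zero at a
source `k₀` with `f k₀ > 0`, so `v = 0`. Positive definiteness and compactness of the unit sphere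
give `dissipation ≥ λ · energy`, and Grönwall's inequality gives the exponential decay.
-/

theorem exists_pos_mul_le_of_sq_homogeneous {V : Type*} [NormedAddCommGroup V]
    [NormedSpace ℝ V] [ProperSpace V] {Q E : V → ℝ} (hQ : Continuous Q) (hE : Continuous E)
    (hQs : ∀ (c : ℝ) v, Q (c • v) = c ^ 2 * Q v) (hEs : ∀ (c : ℝ) v, E (c • v) = c ^ 2 * E v)
    (hpos : ∀ v, v ≠ 0 → 0 < Q v) :
    ∃ lam > 0, ∀ v, lam * E v ≤ Q v := by
  have hS : IsCompact (Metric.sphere (0 : V) 1) := isCompact_sphere 0 1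
  obtain ⟨m, hm, hmQ⟩ := hS.exists_forall_le' hQ.continuousOn
    fun u hu => hpos u (Metric.ne_of_mem_sphere hu one_ne_zero)
  obtain ⟨M, hME⟩ := hS.bddAbove_image hE.continuousOn
  have hM₁ : 0 < max M 1 := lt_max_of_lt_right one_pos
  refine ⟨m / max M 1, div_pos hm hM₁, fun v => ?_⟩
  rcases eq_or_ne v 0 with rfl | hv
  · have hQ0 : Q 0 = 0 := by simpa using hQs 0 0
    have hE0 : E 0 = 0 := by simpa using hEs 0 0
    simp [hQ0, hE0]
  set u := ‖v‖⁻¹ • v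
  have hu : u ∈ Metric.sphere (0 : V) 1 := by simpa [u] using norm_smul_inv_norm (𝕜 := ℝ) hv
  have hvu : v = ‖v‖ • u := by simp [u, smul_smul, hv]
  have hEu : E u ≤ max M 1 := (hME ⟨u, hu, rfl⟩).trans (le_max_left _ _)
  rw [hvu, hQs, hEs]
  calc m / max M 1 * (‖v‖ ^ 2 * E u) = ‖v‖ ^ 2 * (m / max M 1 * E u) := by ring
    _ ≤ ‖v‖ ^ 2 * (m / max M 1 * max M 1) := by gcongr
    _ = ‖v‖ ^ 2 * m := by rw [div_mul_cancel₀ m hM₁.ne']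
    _ ≤ ‖v‖ ^ 2 * Q u := by gcongr; exact hmQ u hu

theorem le_exp_mul_of_hasDerivAt_le_mul {g g' : ℝ → ℝ} {K : ℝ}
    (hg : ∀ s, HasDerivAt g (g' s) s) (hbound : ∀ s, g' s ≤ K * g s) {t : ℝ} (ht : 0 ≤ t) :
    g t ≤ Real.exp (K * t) * g 0 := by
  have := le_gronwallBound_of_liminf_deriv_right_le (a := 0) (b := t) (δ := g 0) (ε := 0)
    (fun s _ => (hg s).continuousAt.continuousWithinAt)
    (fun s _ _ hr => (hg s).hasDerivWithinAt.liminf_right_slope_le hr) le_rfl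
    (fun s _ => by simpa using hbound s) t ⟨ht, le_rfl⟩
  simpa [gronwallBound_ε0, mul_comm] using this

theorem sum_sum_filter_lt_add_swap {ι M : Type*} [Fintype ι] [LinearOrder ι] [AddCommMonoid M]
    (G : ι → ι → M) (hG : ∀ k, G k k = 0) :
    ∑ k, ∑ l ∈ univ.filter (k < ·), (G k l + G l k) = ∑ k, ∑ l, G k l := by
  have hswap : ∑ k, ∑ l ∈ univ.filter (k < ·), G l k = ∑ k, ∑ l ∈ univ.filter (· < k), G k l := by
    simp only [sum_filter]
    exact sum_comm
  rw [sum_congr rfl fun k _ => sum_add_distrib, sum_add_distrib, hswap, ← sum_add_distrib]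
  refine sum_congr rfl fun k _ => ?_
  rw [sum_filter, sum_filter, ← sum_add_distrib]
  refine sum_congr rfl fun l _ => ?_
  rcases lt_trichotomy k l with h | rfl | h
  · simp [h, h.not_gt]
  · simp [hG]
  · simp [h, h.not_gt]

theorem dirichletForm_term_nonneg {ι : Type*} {A : Matrix ι ι ℝ} {vinf : ι → ℝ}
    (hoff : ∀ i j, i ≠ j → 0 ≤ A i j) (hvinf : ∀ k, 0 ≤ vinf k)
    (v : ι → ℝ) (k l : ι) : 0 ≤ A k l * vinf l * (v k / vinf k - v l / vinf l) ^ 2 := by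
  rcases eq_or_ne k l with rfl | hkl
  · simp
  · exact mul_nonneg (mul_nonneg (hoff k l hkl) (hvinf l)) (sq_nonneg _)

section DirichletForm

variable {ι : Type*} [Fintype ι] (A : Matrix ι ι ℝ) (vinf : ι → ℝ)

noncomputable def dirichletForm (v : ι → ℝ) : ℝ :=
  ∑ k, ∑ l, A k l * vinf l * (v k / vinf k - v l / vinf l) ^ 2

theorem sum_filter_lt_eq_dirichletForm [LinearOrder ι] (v : ι → ℝ) :
    ∑ k, ∑ l ∈ univ.filter (k < ·),
        (A k l * vinf l + A l k * vinf k) * (v k / vinf k - v l / vinf l) ^ 2 =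
      dirichletForm A vinf v := by
  rw [dirichletForm, ← sum_sum_filter_lt_add_swap _ (fun k => by simp)]
  refine sum_congr rfl fun k _ => sum_congr rfl fun l _ => by ring

theorem dirichletForm_eq_neg_two_mul_sum (hcol : ∀ j, ∑ i, A i j = 0) (hvinf : ∀ k, vinf k ≠ 0)
    (heq : A *ᵥ vinf = 0) (v : ι → ℝ) :
    dirichletForm A vinf v = -2 * ∑ k, v k * (A *ᵥ v) k / vinf k := by
  have hrow (k : ι) : ∑ l, A k l * vinf l = 0 := congrFun heq k
  have hterm (k l : ι) : A k l * vinf l * (v k / vinf k - v l / vinf l) ^ 2 =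
      (v k / vinf k) ^ 2 * (A k l * vinf l) + v l ^ 2 / vinf l * A k l
        - 2 * (v k / vinf k) * (A k l * v l) := by
    field_simp [hvinf k, hvinf l]
    ring
  calc dirichletForm A vinf v
      = ∑ k, (v k / vinf k) ^ 2 * ∑ l, A k l * vinf l + ∑ l, v l ^ 2 / vinf l * ∑ k, A k l
          - 2 * ∑ k, v k / vinf k * ∑ l, A k l * v l := by
        simp only [dirichletForm, hterm, sum_add_distrib, sum_sub_distrib, mul_sum, mul_assoc]
        rw [sum_comm (f := fun k l => v l ^ 2 / vinf l * A k l)]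
    _ = -2 * ∑ k, v k * (A *ᵥ v) k / vinf k := by
        simp only [hrow, hcol, mul_zero, sum_const_zero, zero_add, zero_sub, mulVec, dotProduct,
          div_mul_eq_mul_div]
        ring

theorem dirichletForm_nonneg (hoff : ∀ i j, i ≠ j → 0 ≤ A i j) (hvinf : ∀ k, 0 ≤ vinf k)
    (v : ι → ℝ) : 0 ≤ dirichletForm A vinf v :=
  sum_nonneg fun k _ => sum_nonneg fun l _ => dirichletForm_term_nonneg hoff hvinf v k l

theorem div_eq_div_of_dirichletForm_eq_zero (hoff : ∀ i j, i ≠ j → 0 ≤ A i j)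
    (hvinf : ∀ k, 0 < vinf k) {v : ι → ℝ} (h0 : dirichletForm A vinf v = 0) {x y : ι}
    (hxy : Relation.ReflTransGen (fun x y => 0 < A y x) x y) : v x / vinf x = v y / vinf y := by
  induction hxy with
  | refl => rfl
  | @tail b c _ hedge ih =>
    have hnonneg := dirichletForm_term_nonneg hoff (fun k => (hvinf k).le) v
    have hrow := (sum_eq_zero_iff_of_nonneg fun k _ => sum_nonneg fun l _ => hnonneg k l).1 h0 c
      (mem_univ c)
    have hterm := (sum_eq_zero_iff_of_nonneg fun l _ => hnonneg c l).1 hrow b (mem_univ b)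
    have hsq := (mul_eq_zero.1 hterm).resolve_left (mul_pos hedge (hvinf b)).ne'
    exact ih.trans (sub_eq_zero.1 (pow_eq_zero_iff two_ne_zero |>.1 hsq)).symm

end DirichletForm

section Dissipation

variable {ι : Type*} [Fintype ι] (A : Matrix ι ι ℝ) (vinf f : ι → ℝ)

noncomputable def energy (v : ι → ℝ) : ℝ := ∑ k, v k ^ 2 / vinf k

noncomputable def dissipation (v : ι → ℝ) : ℝ :=
  dirichletForm A vinf v + 2 * ∑ k, f k * v k ^ 2 / vinf k

theorem continuous_energy : Continuous (energy vinf) := by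
  unfold energy
  fun_prop

theorem continuous_dissipation : Continuous (dissipation A vinf f) := by
  unfold dissipation dirichletForm
  fun_prop

theorem energy_smul (c : ℝ) (v : ι → ℝ) : energy vinf (c • v) = c ^ 2 * energy vinf v := by
  simp only [energy, mul_sum, Pi.smul_apply, smul_eq_mul]
  exact sum_congr rfl fun k _ => by ring

theorem dissipation_smul (c : ℝ) (v : ι → ℝ) :
    dissipation A vinf f (c • v) = c ^ 2 * dissipation A vinf f v := by
  simp only [dissipation, dirichletForm, mul_add, mul_sum, Pi.smul_apply, smul_eq_mul]
  congr 1
  · exact sum_congr rfl fun k _ => sum_congr rfl fun l _ => by ring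
  · exact sum_congr rfl fun k _ => by ring

theorem dissipation_pos (hoff : ∀ i j, i ≠ j → 0 ≤ A i j)
    (hconn : ∀ u v : ι, Relation.ReflTransGen (fun x y => x ≠ y ∧ 0 < A y x) u v)
    (hvinf : ∀ k, 0 < vinf k) (hf : ∀ k, 0 ≤ f k) (hf0 : ∃ k₀, 0 < f k₀) {v : ι → ℝ}
    (hv : v ≠ 0) : 0 < dissipation A vinf f v := by
  have hD := dirichletForm_nonneg A vinf hoff (fun k => (hvinf k).le) v
  have hsrc_nonneg (k : ι) : 0 ≤ f k * v k ^ 2 / vinf k :=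
    div_nonneg (mul_nonneg (hf k) (sq_nonneg _)) (hvinf k).le
  have hsrc := sum_nonneg fun k (_ : k ∈ univ) => hsrc_nonneg k
  refine lt_of_le_of_ne (add_nonneg hD (mul_nonneg zero_le_two hsrc)) fun h => hv ?_
  rw [dissipation] at h
  have hD0 : dirichletForm A vinf v = 0 := by linarith
  have hsrc0 : ∑ k, f k * v k ^ 2 / vinf k = 0 := by linarith
  obtain ⟨k₀, hk₀⟩ := hf0
  have hvk₀ : v k₀ = 0 := by
    have := (sum_eq_zero_iff_of_nonneg fun k _ => hsrc_nonneg k).1 hsrc0 k₀ (mem_univ k₀)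
    simpa [hk₀.ne', (hvinf k₀).ne'] using this
  funext u
  have hratio := div_eq_div_of_dirichletForm_eq_zero A vinf hoff hvinf hD0
    (Relation.ReflTransGen.mono (fun _ _ => And.right) _ _ (hconn u k₀))
  rw [hvk₀, zero_div, div_eq_zero_iff] at hratio
  exact hratio.resolve_right (hvinf u).ne'

theorem hasDerivAt_energy {V : ℝ → ι → ℝ} {V' : ι → ℝ} {t : ℝ}
    (hV : ∀ k, HasDerivAt (fun s => V s k) (V' k) t) :
    HasDerivAt (fun s => energy vinf (V s)) (2 * ∑ k, V t k * V' k / vinf k) t := by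
  refine (HasDerivAt.fun_sum fun k _ => ((hV k).pow 2).div_const (vinf k)).congr_deriv ?_
  rw [mul_sum]
  refine sum_congr rfl fun k _ => ?_
  push_cast
  ring

theorem two_mul_sum_mul_mulVec_eq_neg_dissipation [DecidableEq ι] (hcol : ∀ j, ∑ i, A i j = 0)
    (hvinf : ∀ k, vinf k ≠ 0) (heq : A *ᵥ vinf = 0) (v : ι → ℝ) :
    2 * ∑ k, v k * ((A - diagonal f) *ᵥ v) k / vinf k = -dissipation A vinf f v := by
  have hterm (k : ι) : v k * ((A - diagonal f) *ᵥ v) k / vinf k =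
      v k * (A *ᵥ v) k / vinf k - f k * v k ^ 2 / vinf k := by
    simp only [sub_mulVec, Pi.sub_apply, mulVec_diagonal]
    ring
  rw [dissipation, dirichletForm_eq_neg_two_mul_sum A vinf hcol hvinf heq]
  simp only [hterm, sum_sub_distrib]
  ring

end Dissipation

theorem source_component_exponential_decay
    (N : ℕ) (A : Matrix (Fin N) (Fin N) ℝ)
    (hoff : ∀ i j, i ≠ j → 0 ≤ A i j)
    (hcol : ∀ j, ∑ i, A i j = 0)
    (hconn : ∀ u v : Fin N, Relation.ReflTransGen (fun x y => x ≠ y ∧ 0 < A y x) u v)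
    (vinf : Fin N → ℝ) (hvinf : ∀ k, 0 < vinf k) (heq : A.mulVec vinf = 0)
    (f : Fin N → ℝ) (hf : ∀ k, 0 ≤ f k) (hf0 : ∃ k₀, 0 < f k₀) :
    ∃ lam > 0,
      (∀ v : Fin N → ℝ,
        ∑ k, ∑ l ∈ Finset.univ.filter (fun l => k < l),
            (A k l * vinf l + A l k * vinf k) * (v k / vinf k - v l / vinf l) ^ 2 +
          2 * ∑ k, f k * (v k) ^ 2 / vinf k ≥
        lam * ∑ k, (v k) ^ 2 / vinf k) ∧
      (∀ V : ℝ → Fin N → ℝ,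
        (∀ k t, HasDerivAt (fun s => V s k)
          (((A - Matrix.diagonal f).mulVec (V t)) k) t) →
        ∀ t ≥ (0 : ℝ),
          ∑ k, (V t k) ^ 2 / vinf k ≤
            Real.exp (-lam * t) * ∑ k, (V 0 k) ^ 2 / vinf k) := by
  obtain ⟨lam, hlam, hcoer⟩ := exists_pos_mul_le_of_sq_homogeneous
    (continuous_dissipation A vinf f) (continuous_energy vinf) (dissipation_smul A vinf f)
    (energy_smul vinf) fun v hv => dissipation_pos A vinf f hoff hconn hvinf hf hf0 hv
  have hvinf₀ (k : Fin N) : vinf k ≠ 0 := (hvinf k).ne'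
  refine ⟨lam, hlam, fun v => ?_, fun V hV t ht => ?_⟩
  · rw [sum_filter_lt_eq_dirichletForm]
    exact hcoer v
  · refine le_exp_mul_of_hasDerivAt_le_mul (g := fun s => energy vinf (V s))
      (fun s => hasDerivAt_energy vinf fun k => hV k s) (fun s => ?_) ht
    rw [two_mul_sum_mul_mulVec_eq_neg_dissipation A vinf f hcol hvinf₀ heq]
    linarith [hcoer (V s)]
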